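/- Let G = (V,E) be a DAG whose node set is partitioned into two disjoint sets X and Y with V = X ∪ Y. Then the following are equivalent: (1) some set Z satisfies the adjustment criterion (AC) relative to (X,Y) in G; (2) the empty set satisfies the adjustment criterion relative to (X,Y) in G; (3) there is no edge Y→X in E with Y ∈ Y and X ∈ X. -/

import Mathlib

/-!
Common definitions: mixed graphs, walks, colliders, m-separation,
ancestral graphs, DAGs, MAGs, proper causal paths, adjustment criteria,
inducing paths, and MAG marginalization.
-/

universe u

/-- The four possible kinds of edges of a mixed graph, oriented along the
direction of traversal: `u → v`, `u ← v`, `u ↔ v`, `u − v`. -/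
inductive EType where
  | right : EType
  | left : EType
  | both : EType
  | undirEdge : EType
deriving DecidableEq

namespace EType

/-- The edge has an arrowhead at its first endpoint. -/
def headFst : EType → Prop
  | .left => True
  | .both => True
  | _ => False

/-- The edge has an arrowhead at its second endpoint. -/
def headSnd : EType → Prop
  | .right => True
  | .both => True
  | _ => False

end EType

/-- A mixed graph with directed, bidirected and undirected edges. -/
structure MixedGraph (V : Type u) where
  dir : V → V → Prop
  bi : V → V → Prop
  undir : V → V → Prop
  bi_symm : ∀ u v, bi u v → bi v u
  undir_symm : ∀ u v, undir u v → undir v u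

namespace MixedGraph

variable {V : Type u}

/-- `G.IsEdge e u v` holds if the graph contains the edge `e` from `u` to `v`
(read in the direction of traversal). -/
def IsEdge (G : MixedGraph V) : EType → V → V → Prop
  | .right, u, v => G.dir u v
  | .left, u, v => G.dir v u
  | .both, u, v => G.bi u v
  | .undirEdge, u, v => G.undir u v

/-- Walks in a mixed graph, remembering the type of every traversed edge. -/
inductive Walk (G : MixedGraph V) : V → V → Type u
  | nil (v : V) : Walk G v v
  | cons (u v w : V) (e : EType) (h : G.IsEdge e u v) (p : Walk G v w) : Walk G u w

namespace Walk

variable {G : MixedGraph V}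

/-- The list of nodes visited by a walk (with multiplicity). -/
def support : {a b : V} → G.Walk a b → List V
  | _, _, .nil v => [v]
  | _, _, .cons u _ _ _ _ p => u :: p.support

/-- A path is a walk without repeated nodes. -/
def IsPath {a b : V} (p : G.Walk a b) : Prop := p.support.Nodup

/-- Auxiliary m-connectivity check: `ph` records whether the previous edge of
the walk has an arrowhead at the current start node.  At every interior node,
the node must be a collider (two arrowheads meet) iff it belongs to `Z`. -/
def connFrom (Z : Set V) : Prop → {a b : V} → G.Walk a b → Prop
  | _, _, _, .nil _ => True
  | ph, _, _, .cons u _ _ e _ p =>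
      ((ph ∧ e.headFst) ↔ u ∈ Z) ∧ p.connFrom Z e.headSnd

/-- The walk m-connects its endpoints given `Z`: all colliders and only
colliders on it are in `Z`. -/
def ConnBy (Z : Set V) : {a b : V} → G.Walk a b → Prop
  | _, _, .nil _ => True
  | _, _, .cons _ _ _ e _ p => p.connFrom Z e.headSnd

/-- A causal (directed) walk: every edge points towards the end node. -/
def IsCausal : {a b : V} → G.Walk a b → Prop
  | _, _, .nil _ => True
  | _, _, .cons _ _ _ e _ p => e = EType.right ∧ p.IsCausal

/-- A walk is proper w.r.t. `X` if only its start node may belong to `X`. -/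
def ProperFrom (X : Set V) : {a b : V} → G.Walk a b → Prop
  | _, _, .nil _ => True
  | _, _, .cons _ _ _ _ _ p => ∀ n ∈ p.support, n ∉ X

/-- Concatenation of walks. -/
def append : {a b c : V} → G.Walk a b → G.Walk b c → G.Walk a c
  | _, _, _, .nil _, q => q
  | _, _, _, .cons u v _ e h p, q => .cons u v _ e h (p.append q)

/-- The walk is nonempty and its first edge has an arrowhead at the start
node. -/
def headAtStart : {a b : V} → G.Walk a b → Prop
  | _, _, .nil _ => False
  | _, _, .cons _ _ _ e _ _ => e.headFst

/-- The walk is nonempty and its last edge has an arrowhead at the end node. -/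
def headAtEnd : {a b : V} → G.Walk a b → Prop
  | _, _, .nil _ => False
  | _, _, .cons _ _ _ e _ (.nil _) => e.headSnd
  | _, _, .cons _ _ _ _ _ p => p.headAtEnd

/-- `P` holds of every (ordered) pair of consecutive nodes of the walk. -/
def edgeProp (P : V → V → Prop) : {a b : V} → G.Walk a b → Prop
  | _, _, .nil _ => True
  | _, _, .cons u v _ _ _ p => P u v ∧ p.edgeProp P

end Walk

/-- `x` and `y` are m-connected given `Z`: there is a walk between them on
which all colliders and only colliders are in `Z`. -/
def MConn (G : MixedGraph V) (Z : Set V) (x y : V) : Prop :=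
  ∃ p : G.Walk x y, p.ConnBy Z

/-- `Z` m-separates the node sets `X` and `Y`. -/
def MSep (G : MixedGraph V) (X Y Z : Set V) : Prop :=
  ∀ x ∈ X, ∀ y ∈ Y, ¬ G.MConn Z x y

/-- `Z` is an m-separator relative to `(X, Y)`: it is disjoint from `X ∪ Y`
and m-separates `X` and `Y`. -/
def IsMSep (G : MixedGraph V) (X Y Z : Set V) : Prop :=
  Disjoint Z (X ∪ Y) ∧ G.MSep X Y Z

/-- An `M`-minimal m-separator relative to `(X, Y)`. -/
def IsMinMSep (G : MixedGraph V) (X Y M Z : Set V) : Prop :=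
  G.IsMSep X Y Z ∧ M ⊆ Z ∧ ∀ Z', Z' ⊂ Z → M ⊆ Z' → ¬ G.IsMSep X Y Z'

/-- One step of the anterior relation: a directed or undirected edge. -/
def antEdge (G : MixedGraph V) (u v : V) : Prop := G.dir u v ∨ G.undir u v

/-- `u` is an anterior of `v` (every node is its own anterior). -/
def Anterior (G : MixedGraph V) (u v : V) : Prop :=
  Relation.ReflTransGen G.antEdge u v

/-- The set of anteriors of nodes of `W`. -/
def Ant (G : MixedGraph V) (W : Set V) : Set V := {u | ∃ w ∈ W, G.Anterior u w}

/-- `v` is a descendant of `u`, i.e. there is a directed path `u → ⋯ → v`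
(every node is its own descendant/ancestor). -/
def Anc (G : MixedGraph V) (u v : V) : Prop := Relation.ReflTransGen G.dir u v

/-- The set of descendants of nodes of `W`. -/
def De (G : MixedGraph V) (W : Set V) : Set V := {v | ∃ w ∈ W, G.Anc w v}

/-- The set of ancestors of nodes of `W`. -/
def AnSet (G : MixedGraph V) (W : Set V) : Set V := {v | ∃ w ∈ W, G.Anc v w}

/-- An ancestral graph: (1) for each edge `a ← b` or `a ↔ b`, `a` is not an
anterior of `b`; (2) for each edge `a − b` there is no edge `a ← c`, `a ↔ c`,
`b ← c` or `b ↔ c`. -/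
def IsAG (G : MixedGraph V) : Prop :=
  (∀ a b, G.dir b a ∨ G.bi a b → ¬ G.Anterior a b) ∧
  (∀ a b, G.undir a b →
    ∀ c, ¬ G.dir c a ∧ ¬ G.bi a c ∧ ¬ G.dir c b ∧ ¬ G.bi b c)

/-- A DAG: only directed edges, and no directed cycles. -/
def IsDAG (G : MixedGraph V) : Prop :=
  (∀ u v, ¬ G.bi u v) ∧ (∀ u v, ¬ G.undir u v) ∧
  (∀ v, ¬ Relation.TransGen G.dir v v)

/-- Two nodes are adjacent if they are joined by some edge. -/
def Adjacent (G : MixedGraph V) (u v : V) : Prop :=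
  G.dir u v ∨ G.dir v u ∨ G.bi u v ∨ G.undir u v

/-- A maximal ancestral graph (MAG): only directed and bidirected edges, no
directed cycle, no almost-directed cycle, and every pair of non-adjacent
nodes can be m-separated by some set of the remaining nodes. -/
def IsMAG (G : MixedGraph V) : Prop :=
  (∀ u v, ¬ G.undir u v) ∧
  (∀ v, ¬ Relation.TransGen G.dir v v) ∧
  (∀ u v, G.bi u v → ¬ Relation.TransGen G.dir v u) ∧
  (∀ u v, u ≠ v → ¬ G.Adjacent u v →
    ∃ Z : Set V, u ∉ Z ∧ v ∉ Z ∧ ¬ G.MConn Z u v)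

/-- `PCP G X Y`: the set of nodes, excluding nodes of `X`, that lie on a
proper causal path from `X` to `Y`. -/
def PCP (G : MixedGraph V) (X Y : Set V) : Set V :=
  {w | w ∉ X ∧ ∃ x ∈ X, ∃ y ∈ Y, ∃ p : G.Walk x y,
    p.IsPath ∧ p.IsCausal ∧ p.ProperFrom X ∧ w ∈ p.support}

/-- `Dpcp G X Y`: the descendants of nodes on proper causal paths. -/
def Dpcp (G : MixedGraph V) (X Y : Set V) : Set V := G.De (G.PCP X Y)

/-- Remove from `G` all edges into `A` and all edges out of `B`. -/
def rmInOut (G : MixedGraph V) (A B : Set V) : MixedGraph V where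
  dir u v := G.dir u v ∧ v ∉ A ∧ u ∉ B
  bi u v := G.bi u v ∧ u ∉ A ∧ v ∉ A
  undir u v := G.undir u v ∧ u ∉ B ∧ v ∉ B
  bi_symm := fun u v h => ⟨G.bi_symm u v h.1, h.2.2, h.2.1⟩
  undir_symm := fun u v h => ⟨G.undir_symm u v h.1, h.2.2, h.2.1⟩

/-- The parametrized proper back-door graph: remove every edge `x → d` with
`x ∈ X` and `d ∈ PCP(X,Y) ∪ C`. -/
def pbdC (G : MixedGraph V) (X Y C : Set V) : MixedGraph V where
  dir u v := G.dir u v ∧ ¬(u ∈ X ∧ v ∈ G.PCP X Y ∪ C)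
  bi := G.bi
  undir := G.undir
  bi_symm := G.bi_symm
  undir_symm := G.undir_symm

/-- The proper back-door graph. -/
def pbd (G : MixedGraph V) (X Y : Set V) : MixedGraph V := G.pbdC X Y ∅

/-- The adjustment criterion (AC) in a DAG: (a) no element of `Z` is a
descendant in `G_{X̄}` of a node outside `X` lying on a proper causal path
from `X` to `Y`; (b) every proper non-causal path from `X` to `Y` is blocked
by `Z`. -/
def SatisfiesACdag (G : MixedGraph V) (X Y Z : Set V) : Prop :=
  (∀ z ∈ Z, z ∉ (G.rmInOut X ∅).De (G.PCP X Y)) ∧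
  (∀ x ∈ X, ∀ y ∈ Y, ∀ p : G.Walk x y,
    p.IsPath → p.ProperFrom X → ¬ p.IsCausal → ¬ p.ConnBy Z)

/-- The adjustment criterion (AC) in a MAG: (a) no element of `Z` is a
descendant in `M` of a node outside `X` lying on a proper causal path from
`X` to `Y`; (b) every proper non-causal path from `X` to `Y` is blocked by
`Z`. -/
def SatisfiesACmag (G : MixedGraph V) (X Y Z : Set V) : Prop :=
  (∀ z ∈ Z, z ∉ G.Dpcp X Y) ∧
  (∀ x ∈ X, ∀ y ∈ Y, ∀ p : G.Walk x y,
    p.IsPath → p.ProperFrom X → ¬ p.IsCausal → ¬ p.ConnBy Z)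

/-- The constructive back-door criterion (CBC): (a) `Z` avoids
`Dpcp(X,Y)`; (b) `Z` m-separates `X` and `Y` in the proper back-door
graph. -/
def SatisfiesCBC (G : MixedGraph V) (X Y Z : Set V) : Prop :=
  (∀ z ∈ Z, z ∉ G.Dpcp X Y) ∧ (G.pbd X Y).MSep X Y Z

/-- The parametrized constructive back-door criterion CBC(A,B,C). -/
def SatisfiesCBCP (G : MixedGraph V) (X Y Z A B C : Set V) : Prop :=
  (∀ z ∈ Z, z ∉ (G.rmInOut A B).De (G.PCP X Y)) ∧ (G.pbdC X Y C).MSep X Y Z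

namespace Walk

variable {G : MixedGraph V}

/-- Auxiliary check for inducing paths: every interior non-collider is in
`L`, and every interior collider is an ancestor of a node of `T`.  `ph`
records whether the previous edge has an arrowhead at the current node. -/
def indFrom (L T : Set V) : Prop → {a b : V} → G.Walk a b → Prop
  | _, _, _, .nil _ => True
  | ph, _, _, .cons u _ _ e _ p =>
      ((ph ∧ e.headFst) → ∃ t ∈ T, Relation.ReflTransGen G.dir u t) ∧
      (¬(ph ∧ e.headFst) → u ∈ L) ∧ p.indFrom L T e.headSnd

/-- Interior conditions for inducing paths (endpoints are exempt). -/
def indBody (L T : Set V) : {a b : V} → G.Walk a b → Prop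
  | _, _, .nil _ => True
  | _, _, .cons _ _ _ e _ p => p.indFrom L T e.headSnd

end Walk

/-- `p` is an inducing path with respect to `Z` and `L`: a path on which
every non-collider other than the endpoints is in `L` and every collider is
an ancestor of the endpoints or of `Z`. -/
def IsInducing (G : MixedGraph V) (Z L : Set V) {a b : V} (p : G.Walk a b) : Prop :=
  p.IsPath ∧ p.indBody L ({a, b} ∪ Z)

/-- Adjacency in the MAG `G[∅_L`: `u, v ∉ L` are adjacent iff they cannot be
d-separated in `G` by any set `W ⊆ V∖L` (not containing `u, v`). -/
def magAdj (G : MixedGraph V) (L : Set V) (u v : V) : Prop :=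
  u ∉ L ∧ v ∉ L ∧ u ≠ v ∧
  ∀ W : Set V, Disjoint W L → u ∉ W → v ∉ W → (G.MConn W u v ∧ G.MConn W v u)

/-- The MAG `G[∅_L` obtained from the DAG `G` by marginalizing `L`: adjacent
`u, v` are joined by `u → v` if `u` is an ancestor of `v` in `G` and `v` is
not an ancestor of `u`, and by `u ↔ v` if neither is an ancestor of the
other. -/
def mag (G : MixedGraph V) (L : Set V) : MixedGraph V where
  dir u v := G.magAdj L u v ∧ G.Anc u v ∧ ¬ G.Anc v u
  bi u v := G.magAdj L u v ∧ ¬ G.Anc u v ∧ ¬ G.Anc v u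
  undir _ _ := False
  bi_symm := fun u v h =>
    ⟨⟨h.1.2.1, h.1.1, h.1.2.2.1.symm,
      fun W hW hv hu => ⟨(h.1.2.2.2 W hW hu hv).2, (h.1.2.2.2 W hW hu hv).1⟩⟩,
      h.2.2, h.2.1⟩
  undir_symm := fun _ _ h => h.elim

/-- An inducing `Z`-trail in the MAG `G[∅_L`: a path whose interior nodes are
exactly the `Z`-nodes on it, each consecutive pair being linked in `G` by an
inducing path w.r.t. `∅, L` which has arrowheads at the interior nodes. -/
def IsInducingZTrail (G : MixedGraph V) (Z L : Set V) {a b : V}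
    (p : (G.mag L).Walk a b) : Prop :=
  p.IsPath ∧ a ∉ Z ∧ b ∉ Z ∧
  (∀ v ∈ p.support, v ≠ a → v ≠ b → v ∈ Z) ∧
  p.edgeProp (fun u v => ∃ q : G.Walk u v, G.IsInducing ∅ L q ∧
    (u ∈ Z → q.headAtStart) ∧ (v ∈ Z → q.headAtEnd))

end MixedGraph

open MixedGraph

variable {V : Type u}

/-!
Since `V = X ∪ Y`, the empty set is the only candidate adjustment set, and condition (a) is
vacuous for it. An edge `y → x` gives the proper non-causal path `x ← y`, which `∅` does not
block. Conversely, without such edges every proper path leaves `X` through an edge `x → v`;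
if `∅` does not block it, it has no colliders, so all its later edges point forward too and
it is causal.
-/

namespace MixedGraph

lemma IsDAG.eq_right_or_eq_left {G : MixedGraph V} (hG : G.IsDAG) {e : EType} {u v : V}
    (h : G.IsEdge e u v) : e = .right ∨ e = .left := by
  cases e with
  | right => exact .inl rfl
  | left => exact .inr rfl
  | both => exact absurd h (hG.1 u v)
  | undirEdge => exact absurd h (hG.2.1 u v)

namespace Walk

variable {G : MixedGraph V}

lemma start_mem_support {a b : V} (p : G.Walk a b) : a ∈ p.support := by
  cases p <;> simp [support]

/-- The flag `True` says that the walk is entered through an arrowhead at its start. -/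
lemma isCausal_of_connFrom_empty (hG : G.IsDAG) {a b : V} (p : G.Walk a b)
    (hp : p.connFrom ∅ True) : p.IsCausal := by
  induction p with
  | nil => trivial
  | cons u v w e h q ih =>
    obtain ⟨hnoncollider, hq⟩ := hp
    rcases hG.eq_right_or_eq_left h with rfl | rfl
    · exact ⟨rfl, ih hq⟩
    · exact absurd (hnoncollider.mp ⟨trivial, trivial⟩) (Set.notMem_empty u)

end Walk

lemma not_satisfiesACdag_empty_of_dir {G : MixedGraph V} {X Y : Set V} {x y : V}
    (hx : x ∈ X) (hy : y ∈ Y) (hyX : y ∉ X) (hyx : G.dir y x) :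
    ¬ G.SatisfiesACdag X Y ∅ := by
  have hxy : x ≠ y := fun h => hyX (h ▸ hx)
  intro hAC
  refine hAC.2 x hx y hy (.cons x y y .left hyx (.nil y)) ?_ ?_ ?_ trivial
  · simp [Walk.IsPath, Walk.support, hxy]
  · simpa [Walk.ProperFrom, Walk.support] using hyX
  · rintro ⟨h, -⟩
    cases h

lemma satisfiesACdag_empty_of_forall_not_dir {G : MixedGraph V} (hG : G.IsDAG) {X Y : Set V}
    (h : ∀ v ∉ X, ∀ x ∈ X, ¬ G.dir v x) : G.SatisfiesACdag X Y ∅ := by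
  refine ⟨by simp, ?_⟩
  intro x hx y hy p _ hproper hnoncausal hconn
  cases p with
  | nil => exact hnoncausal trivial
  | cons _ v _ e hedge q =>
    have hvX : v ∉ X := hproper v q.start_mem_support
    rcases hG.eq_right_or_eq_left hedge with rfl | rfl
    · exact hnoncausal ⟨rfl, q.isCausal_of_connFrom_empty hG hconn⟩
    · exact h v hvX x hx hedge

end MixedGraph

theorem statement_10 (G : MixedGraph V) (hDAG : G.IsDAG)
    (X Y : Set V) (hXY : Disjoint X Y) (hcover : X ∪ Y = Set.univ) :
    ((∃ Z : Set V, Disjoint Z (X ∪ Y) ∧ G.SatisfiesACdag X Y Z) ↔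
      G.SatisfiesACdag X Y ∅) ∧
    (G.SatisfiesACdag X Y ∅ ↔ ∀ y ∈ Y, ∀ x ∈ X, ¬ G.dir y x) := by
  have hempty : ∀ Z : Set V, Disjoint Z (X ∪ Y) → Z = ∅ := by
    simp [hcover]
  have hmemY : ∀ v ∉ X, v ∈ Y := fun v hvX =>
    (hcover ▸ Set.mem_univ v : v ∈ X ∪ Y).resolve_left hvX
  refine ⟨⟨fun ⟨Z, hZ, hAC⟩ => hempty Z hZ ▸ hAC, fun h => ⟨∅, Set.empty_disjoint _, h⟩⟩,
    ⟨fun hAC y hy x hx hyx =>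
      not_satisfiesACdag_empty_of_dir hx hy (Set.disjoint_right.mp hXY hy) hyx hAC,
    fun h => satisfiesACdag_empty_of_forall_not_dir hDAG fun v hvX => h v (hmemY v hvX)⟩⟩
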